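/- arXiv:0903.1196 — 8 statements merged into one kernel-verified Lean document; each statement's English description precedes it below -/
import Mathlib

section
/- In a meadow, the inverse of a product is the product of the inverses: (x·y)⁻¹ = x⁻¹·y⁻¹ for all x, y. -/
theorem meadow_inv_uniq {M : Type*} [CommRing M] (x a b : M)
    (ha1 : x * x * a = x) (ha2 : a * a * x = a)
    (hb1 : x * x * b = x) (hb2 : b * b * x = b) : a = b := by
  have h1 : a = a * x * b := by
    calc a = a * a * x := ha2.symm
    _ = a * a * (x * x * b) := by rw [hb1]
    _ = (a * a * x) * x * b := by ring
    _ = a * x * b := by rw [ha2]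
  have h2 : b = b * x * a := by
    calc b = b * b * x := hb2.symm
    _ = b * b * (x * x * a) := by rw [ha1]
    _ = (b * b * x) * x * a := by ring
    _ = b * x * a := by rw [hb2]
  calc a = a * x * b := h1
  _ = b * x * a := by ring
  _ = b := h2.symm

/-- In a meadow, (x·y)⁻¹ = x⁻¹·y⁻¹ for all x, y. -/
theorem meadow_inv_mul {M : Type*} [CommRing M] (inv : M → M)
    (h1 : ∀ x, x * x * inv x = x) (h2 : ∀ x, inv x * inv x * x = inv x)
    (x y : M) : inv (x * y) = inv x * inv y := by
  apply meadow_inv_uniq (x * y) _ _ (h1 _) (h2 _)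
  · calc (x * y) * (x * y) * (inv x * inv y)
        = (x * x * inv x) * (y * y * inv y) := by ring
    _ = x * y := by rw [h1, h1]
  · calc (inv x * inv y) * (inv x * inv y) * (x * y)
        = (inv x * inv x * x) * (inv y * inv y * y) := by ring
    _ = inv x * inv y := by rw [h2, h2]
end

section
/- In a meadow, (-x)⁻¹ = -(x⁻¹) for every x. -/
lemma meadow_inv_uniq_s8 {M : Type*} [CommRing M] (x y y' : M)
    (hy1 : x * x * y = x) (hy2 : y * y * x = y)
    (hy1' : x * x * y' = x) (hy2' : y' * y' * x = y') : y = y' := by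
  have h3 : x*y*(x*y') = x*y' := by linear_combination y' * hy1
  have h4 : x*y*(x*y') = x*y := by linear_combination y * hy1'
  have hA : x*y = x*y' := by rw [← h4, h3]
  linear_combination -hy2 + hy2' + (y + y') * hA

/-- In a meadow, (-x)⁻¹ = -(x⁻¹) for every x. -/
theorem meadow_inv_neg {M : Type*} [CommRing M] (inv : M → M)
    (h1 : ∀ x, x * x * inv x = x) (h2 : ∀ x, inv x * inv x * x = inv x)
    (x : M) : inv (-x) = -(inv x) := by
  exact meadow_inv_uniq_s8 (-x) (inv (-x)) (-(inv x)) (h1 (-x)) (h2 (-x))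
    (by linear_combination -h1 x) (by linear_combination -h2 x)
end

section
/- In a meadow, if n > 2 and xⁿ = x then x⁻¹ = x^(n-2). -/
/-- In a meadow, if n > 2 and xⁿ = x then x⁻¹ = x^(n-2). -/
theorem meadow_inv_of_pow_eq {M : Type*} [CommRing M] (inv : M → M)
    (h1 : ∀ x, x * x * inv x = x) (h2 : ∀ x, inv x * inv x * x = inv x)
    (x : M) (n : ℕ) (hn : 2 < n) (hx : x ^ n = x) : inv x = x ^ (n - 2) := by
  obtain ⟨m, rfl⟩ : ∃ m, n = m + 3 := ⟨n - 3, by omega⟩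
  have key : m + 3 - 2 = m + 1 := by omega
  calc inv x = inv x * inv x * x := (h2 x).symm
    _ = inv x * inv x * (x * x * x ^ (m + 1)) := by
        rw [show x * x * x ^ (m + 1) = x ^ (m + 3) by ring, hx]
    _ = (x * x * inv x) * inv x * x ^ (m + 1) := by ring
    _ = x * inv x * x ^ (m + 1) := by rw [h1 x]
    _ = (x * x * inv x) * x ^ m := by ring
    _ = x * x ^ m := by rw [h1 x]
    _ = x ^ (m + 3 - 2) := by rw [key]; ring
end

section
/- The ring Z/nZ (n ≥ 1) is a meadow (every element has a generalized inverse) if and only if n is squarefree. -/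
/-!
A meadow has no nonzero nilpotents: if `x * x = 0` then `x = x * x * y = 0`. Conversely a reduced
commutative Artinian ring is a finite product of fields, and a field is a meadow with `y = x⁻¹`
(including `0⁻¹ = 0`). For `n ≥ 1` the ring `ZMod n` is finite, hence Artinian, and it is reduced
exactly when `n` is squarefree.
-/

def IsMeadow (M : Type*) [Mul M] : Prop :=
  ∀ x : M, ∃ y : M, x * x * y = x ∧ y * y * x = y

theorem isMeadow_of_groupWithZero (G₀ : Type*) [GroupWithZero G₀] : IsMeadow G₀ :=
  fun x => ⟨x⁻¹, mul_self_mul_inv x, by simpa using mul_self_mul_inv x⁻¹⟩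

namespace IsMeadow

theorem pi {ι : Type*} {M : ι → Type*} [∀ i, Mul (M i)] (h : ∀ i, IsMeadow (M i)) :
    IsMeadow (∀ i, M i) := by
  intro x
  choose y hxy hyx using fun i => h i (x i)
  exact ⟨y, funext hxy, funext hyx⟩

theorem of_mulEquiv {M N : Type*} [Mul M] [Mul N] (e : M ≃* N) (h : IsMeadow N) :
    IsMeadow M := by
  intro x
  obtain ⟨y, hxy, hyx⟩ := h (e x)
  refine ⟨e.symm y, e.injective ?_, e.injective ?_⟩ <;> simpa

theorem isReduced {M : Type*} [MonoidWithZero M] (h : IsMeadow M) : IsReduced M := by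
  refine (isReduced_iff_pow_one_lt 2 one_lt_two).2 fun x hx => ?_
  obtain ⟨y, hxy, -⟩ := h x
  rwa [← pow_two, hx, zero_mul, eq_comm] at hxy

end IsMeadow

theorem IsArtinianRing.isMeadow_iff_isReduced (R : Type*) [CommRing R] [IsArtinianRing R] :
    IsMeadow R ↔ IsReduced R := by
  refine ⟨IsMeadow.isReduced, fun _ => ?_⟩
  let := IsArtinianRing.fieldOfSubtypeIsMaximal R
  exact (IsMeadow.pi fun _ => isMeadow_of_groupWithZero _).of_mulEquiv
    (IsArtinianRing.equivPi R).toMulEquiv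

/-- Z/nZ (n ≥ 1) is a meadow iff n is squarefree. -/
theorem zmod_meadow_iff_squarefree (n : ℕ) (hn : 1 ≤ n) :
    (∀ x : ZMod n, ∃ y : ZMod n, x * x * y = x ∧ y * y * x = y) ↔ Squarefree n := by
  have : NeZero n := ⟨by omega⟩
  change IsMeadow (ZMod n) ↔ _
  rw [IsArtinianRing.isMeadow_iff_isReduced, isReduced_zmod, or_iff_left (NeZero.ne n)]
end

section
/- In a meadow M, if e is an idempotent then the set e·M is a meadow with multiplicative identity e (it is closed under addition, negation, multiplication, and generalized inverse). -/
/-- In a meadow M, if e is an idempotent then e·M is a meadow with multiplicative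
identity e: it contains e, is closed under addition, negation, multiplication and
generalized inverse, and e acts as identity on it. -/
theorem meadow_idempotent_submeadow {M : Type*} [CommRing M] (inv : M → M)
    (h1 : ∀ x, x * x * inv x = x) (h2 : ∀ x, inv x * inv x * x = inv x)
    (e : M) (he0 : e ≠ 0) (he : e * e = e) :
    (∃ m, e = e * m) ∧
    (∀ x y, (∃ m, x = e * m) → (∃ m, y = e * m) → ∃ m, x + y = e * m) ∧
    (∀ x, (∃ m, x = e * m) → ∃ m, -x = e * m) ∧
    (∀ x y, (∃ m, x = e * m) → (∃ m, y = e * m) → ∃ m, x * y = e * m) ∧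
    (∀ x, (∃ m, x = e * m) → ∃ m, inv x = e * m) ∧
    (∀ x, (∃ m, x = e * m) → e * x = x) := by
  have hid : ∀ x : M, (∃ m, x = e * m) → e * x = x := by
    rintro x ⟨m, rfl⟩
    rw [← mul_assoc, he]
  refine ⟨⟨e, he.symm⟩, ?_, ?_, ?_, ?_, hid⟩
  · rintro x y ⟨m, rfl⟩ ⟨n, rfl⟩
    exact ⟨m + n, by ring⟩
  · rintro x ⟨m, rfl⟩
    exact ⟨-m, by ring⟩
  · rintro x y ⟨m, rfl⟩ ⟨n, rfl⟩
    exact ⟨m * e * n, by ring⟩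
  · intro x hx
    refine ⟨inv x, ?_⟩
    have hx' := hid x hx
    calc inv x = inv x * inv x * x := (h2 x).symm
    _ = inv x * inv x * (e * x) := by rw [hx']
    _ = e * (inv x * inv x * x) := by ring
    _ = e * inv x := by rw [h2]
end

section
/- In a meadow M, if e is a minimal idempotent then e·M is a field with multiplicative identity e: every nonzero element e·m of e·M satisfies (e·m)·(e·m)⁻¹ = e. -/
/-- In a meadow M, if e is a minimal idempotent then e·M is a field with
multiplicative identity e: every nonzero element e·m satisfies (e·m)·(e·m)⁻¹ = e. -/
theorem meadow_minimal_idempotent_field {M : Type*} [CommRing M] (inv : M → M)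
    (h1 : ∀ x, x * x * inv x = x) (h2 : ∀ x, inv x * inv x * x = inv x)
    (e : M) (he0 : e ≠ 0) (he : e * e = e)
    (hmin : ∀ e', e' ≠ 0 → e' * e' = e' → e' * e = e' → e' = e) :
    ∀ m : M, e * m ≠ 0 → (e * m) * inv (e * m) = e := by
  intro m hm
  set a := e * m with ha
  set f := a * inv a with hf
  apply hmin
  · intro h0
    apply hm
    have : a = a * f := by rw [hf]; ring_nf; linear_combination -h1 a
    rw [this, h0, mul_zero]
  · show f * f = f
    calc f * f = (a * a * inv a) * inv a := by ring
    _ = f := by rw [h1]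
  · show f * e = f
    calc f * e = (e * e) * m * inv a := by rw [hf, ha]; ring
    _ = f := by rw [he]
end

section
/- In a meadow, two distinct minimal idempotents are orthogonal: e·e' = 0. -/
/-- In a meadow, two distinct minimal idempotents are orthogonal: e·e' = 0. -/
theorem meadow_minimal_idempotents_orthogonal {M : Type*} [CommRing M] (inv : M → M)
    (h1 : ∀ x, x * x * inv x = x) (h2 : ∀ x, inv x * inv x * x = inv x)
    (e e' : M) (he0 : e ≠ 0) (he : e * e = e)
    (hemin : ∀ f, f ≠ 0 → f * f = f → f * e = f → f = e)
    (he'0 : e' ≠ 0) (he' : e' * e' = e')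
    (he'min : ∀ f, f ≠ 0 → f * f = f → f * e' = f → f = e')
    (hne : e ≠ e') : e * e' = 0 := by
  by_contra h
  have hidem : (e * e') * (e * e') = e * e' := by
    calc e * e' * (e * e') = (e * e) * (e' * e') := by ring
    _ = e * e' := by rw [he, he']
  have h3 : (e * e') * e = e * e' := by
    calc e * e' * e = (e * e) * e' := by ring
    _ = e * e' := by rw [he]
  have h4 : (e * e') * e' = e * e' := by
    calc e * e' * e' = e * (e' * e') := by ring
    _ = e * e' := by rw [he']
  exact hne ((hemin _ h hidem h3).symm.trans (he'min _ h hidem h4))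
end

section
/- Let M be a finite meadow with minimal idempotents e₁, …, eₙ. Then e₁ + ⋯ + eₙ = 1, and the map m ↦ (e₁·m, …, eₙ·m) is a ring isomorphism from M onto the product e₁·M × ⋯ × eₙ·M. -/
/-- Let M be a finite meadow with set E of minimal idempotents. Then the sum of the
minimal idempotents is 1, and m ↦ (e·m)_{e ∈ E} is a ring isomorphism of M onto the
product of the meadows e·M: it is additive and multiplicative componentwise, injective,
and surjective onto the set of families with components in e·M. -/
theorem finite_meadow_decomposition {M : Type*} [CommRing M] [Fintype M]
    (inv : M → M)
    (h1 : ∀ x, x * x * inv x = x) (h2 : ∀ x, inv x * inv x * x = inv x)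
    (E : Finset M)
    (hE : ∀ e, e ∈ E ↔ e ≠ 0 ∧ e * e = e ∧
      ∀ e', e' ≠ 0 → e' * e' = e' → e' * e = e' → e' = e) :
    (∑ e ∈ E, e = 1) ∧
    (∀ e ∈ E, ∀ m m' : M, e * (m + m') = e * m + e * m') ∧
    (∀ e ∈ E, ∀ m m' : M, e * (m * m') = (e * m) * (e * m')) ∧
    (∀ m m' : M, (∀ e ∈ E, e * m = e * m') → m = m') ∧
    (∀ f : M → M, (∀ e ∈ E, ∃ m, f e = e * m) → ∃ m : M, ∀ e ∈ E, e * m = f e) := by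
  classical
  -- orthogonality of distinct minimal idempotents
  have orth : ∀ e ∈ E, ∀ e' ∈ E, e ≠ e' → e * e' = 0 := by
    intro e he e' he' hne
    by_contra h
    obtain ⟨he0, hee, hmin⟩ := (hE e).1 he
    obtain ⟨he'0, he'e', hmin'⟩ := (hE e').1 he'
    have hid : (e * e') * (e * e') = e * e' := by
      have : (e * e') * (e * e') = (e * e) * (e' * e') := by ring
      rw [this, hee, he'e']
    have hle : (e * e') * e = e * e' := by
      have : (e * e') * e = (e * e) * e' := by ring
      rw [this, hee]
    have hle' : (e * e') * e' = e * e' := by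
      have : (e * e') * e' = e * (e' * e') := by ring
      rw [this, he'e']
    have h1' := hmin (e * e') h hid hle
    have h2' := hmin' (e * e') h hid hle'
    exact hne (h1' ▸ h2')
  have hsum_e : ∀ e ∈ E, (∑ e' ∈ E, e') * e = e := by
    intro e he
    rw [Finset.sum_mul, Finset.sum_eq_single e]
    · exact (hE e).1 he |>.2.1
    · intro b hb hbne
      exact orth b hb e he hbne
    · intro h; exact absurd he h
  -- existence of a minimal idempotent below any nonzero idempotent
  have exists_min : ∀ t : M, t ≠ 0 → t * t = t →
      ∃ f : M, f ≠ 0 ∧ f * f = f ∧ f * t = f ∧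
        ∀ g, g ≠ 0 → g * g = g → g * f = g → g = f := by
    have key : ∀ n : ℕ, ∀ t : M,
        (Finset.univ.filter (fun h => h ≠ 0 ∧ h * h = h ∧ h * t = h)).card ≤ n →
        t ≠ 0 → t * t = t →
        ∃ f : M, f ≠ 0 ∧ f * f = f ∧ f * t = f ∧
          ∀ g, g ≠ 0 → g * g = g → g * f = g → g = f := by
      intro n
      induction n with
      | zero =>
        intro t hcard ht0 htt
        exfalso
        have hmem : t ∈ Finset.univ.filter (fun h => h ≠ 0 ∧ h * h = h ∧ h * t = h) := by
          simp [ht0, htt]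
        have := Finset.card_pos.2 ⟨t, hmem⟩
        omega
      | succ n ih =>
        intro t hcard ht0 htt
        by_cases hmin : ∀ g, g ≠ 0 → g * g = g → g * t = g → g = t
        · exact ⟨t, ht0, htt, htt, hmin⟩
        · push_neg at hmin
          obtain ⟨g, hg0, hgg, hgt, hgne⟩ := hmin
          have hsub : (Finset.univ.filter (fun h => h ≠ 0 ∧ h * h = h ∧ h * g = h)) ⊂
              (Finset.univ.filter (fun h => h ≠ 0 ∧ h * h = h ∧ h * t = h)) := by
            constructor
            · intro h hh
              simp only [Finset.mem_filter, Finset.mem_univ, true_and] at hh ⊢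
              obtain ⟨h0, hhh, hhg⟩ := hh
              refine ⟨h0, hhh, ?_⟩
              calc h * t = (h * g) * t := by rw [hhg]
                _ = h * (g * t) := by ring
                _ = h * g := by rw [hgt]
                _ = h := hhg
            · intro hsub'
              have htin : t ∈ Finset.univ.filter (fun h => h ≠ 0 ∧ h * h = h ∧ h * t = h) := by
                simp [ht0, htt]
              have := hsub' htin
              simp only [Finset.mem_filter, Finset.mem_univ, true_and] at this
              have htg : t * g = t := this.2.2
              apply hgne
              calc g = g * t := hgt.symm
                _ = t * g := by ring
                _ = t := htg
          have hlt := Finset.card_lt_card hsub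
          obtain ⟨f, hf0, hff, hfg, hfmin⟩ := ih g (by omega) hg0 hgg
          refine ⟨f, hf0, hff, ?_, hfmin⟩
          calc f * t = (f * g) * t := by rw [hfg]
            _ = f * (g * t) := by ring
            _ = f * g := by rw [hgt]
            _ = f := hfg
    intro t ht0 htt
    exact key _ t le_rfl ht0 htt
  -- the sum of minimal idempotents is 1
  have hs : (∑ e ∈ E, e) = 1 := by
    by_contra hne
    set s := ∑ e ∈ E, e with hs_def
    have hss : s * s = s := by
      rw [hs_def, Finset.mul_sum]
      exact Finset.sum_congr rfl fun e he => hsum_e e he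
    have ht0 : (1 : M) - s ≠ 0 := fun h => hne (by linear_combination -h)
    have htt : (1 - s) * (1 - s) = 1 - s := by linear_combination hss
    obtain ⟨f, hf0, hff, hft, hfmin⟩ := exists_min (1 - s) ht0 htt
    have hfE : f ∈ E := (hE f).2 ⟨hf0, hff, hfmin⟩
    have hsf : s * f = f := hsum_e f hfE
    apply hf0
    calc f = f * (1 - s) := hft.symm
      _ = f - s * f := by ring
      _ = f - f := by rw [hsf]
      _ = 0 := by ring
  refine ⟨hs, ?_, ?_, ?_, ?_⟩
  · intro e _ m m'; ring
  · intro e he m m'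
    have hee : e * e = e := ((hE e).1 he).2.1
    calc e * (m * m') = (e * e) * (m * m') := by rw [hee]
      _ = (e * m) * (e * m') := by ring
  · intro m m' h
    calc m = 1 * m := by ring
      _ = (∑ e ∈ E, e) * m := by rw [hs]
      _ = ∑ e ∈ E, e * m := by rw [Finset.sum_mul]
      _ = ∑ e ∈ E, e * m' := Finset.sum_congr rfl fun e he => h e he
      _ = (∑ e ∈ E, e) * m' := by rw [Finset.sum_mul]
      _ = 1 * m' := by rw [hs]
      _ = m' := by ring
  · intro f hf
    refine ⟨∑ e ∈ E, f e, fun e' he' => ?_⟩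
    rw [Finset.mul_sum, Finset.sum_eq_single e']
    · obtain ⟨m, hm⟩ := hf e' he'
      have hee : e' * e' = e' := ((hE e').1 he').2.1
      calc e' * f e' = e' * (e' * m) := by rw [hm]
        _ = (e' * e') * m := by ring
        _ = e' * m := by rw [hee]
        _ = f e' := hm.symm
    · intro b hb hbne
      obtain ⟨m, hm⟩ := hf b hb
      calc e' * f b = e' * (b * m) := by rw [hm]
        _ = (e' * b) * m := by ring
        _ = 0 * m := by rw [orth e' he' b hb (Ne.symm hbne)]
        _ = 0 := by ring
    · intro h; exact absurd he' h
end
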